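/- Let ν ∈ (ℤ_{≥0})^n be a composition and 1 ≤ i ≤ n−1 with ν_i < ν_{i+1}, and let u = (i, ν_i + 1), which is a box of dg(s_i ν), and u′ = (i+1, ν_i + 1), which is a box of dg(ν). Then: (a) ℓ_{s_i ν}(u) = ℓ_ν(u′) and a_{s_i ν}(u) = a_ν(u′) + 1; (b) in ℤ[q,t] one has the product identity ∏_{□ ∈ dg(ν)} (1 − q^{ℓ_ν(□)+1} t^{a_ν(□)}) · (1 − q^{ℓ_{s_i ν}(u)+1} t^{a_{s_i ν}(u)}) = ∏_{□ ∈ dg(s_i ν)} (1 − q^{ℓ_{s_i ν}(□)+1} t^{a_{s_i ν}(□)}) · (1 − q^{ℓ_{s_i ν}(u)+1} t^{a_{s_i ν}(u)−1}). -/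
import Mathlib


noncomputable section
set_option synthInstance.maxHeartbeats 1000000
set_option maxHeartbeats 1000000

open MvPolynomial

/-- The diagram `dg(ν) = {(i,j) : 1 ≤ j ≤ ν_i}` of a composition `ν`. -/
def dgF (n : ℕ) (ν : Fin n → ℕ) : Finset (Fin n × ℕ) :=
  Finset.univ.biUnion fun i : Fin n => (Finset.Icc 1 (ν i)).image fun j => (i, j)

/-- The leg `ℓ_ν(i,j) = ν_i − j` of a box. -/
def legF (n : ℕ) (ν : Fin n → ℕ) (p : Fin n × ℕ) : ℕ := ν p.1 - p.2

/-- The arm `a_ν(i,j) = #{r < i : j ≤ ν_r ≤ ν_i} + #{r > i : j−1 ≤ ν_r < ν_i}` of a box. -/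
def armF (n : ℕ) (ν : Fin n → ℕ) (p : Fin n × ℕ) : ℕ :=
  (Finset.univ.filter fun r : Fin n => r < p.1 ∧ p.2 ≤ ν r ∧ ν r ≤ ν p.1).card +
  (Finset.univ.filter fun r : Fin n => p.1 < r ∧ p.2 - 1 ≤ ν r ∧ ν r < ν p.1).card

/-- The modified arm `ã_ν(i,j) = #{r < i : j ≤ ν_r ≤ ν_i} + #{r > i : j ≤ ν_r < ν_i}`. -/
def armModF (n : ℕ) (ν : Fin n → ℕ) (p : Fin n × ℕ) : ℕ :=
  (Finset.univ.filter fun r : Fin n => r < p.1 ∧ p.2 ≤ ν r ∧ ν r ≤ ν p.1).card +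
  (Finset.univ.filter fun r : Fin n => p.1 < r ∧ p.2 ≤ ν r ∧ ν r < ν p.1).card

/-- `ℤ[q,t]`. -/
abbrev Zqt : Type := MvPolynomial (Fin 2) ℤ

/-- The indeterminate `q` of `ℤ[q,t]`. -/
def qZ : Zqt := X 0

/-- The indeterminate `t` of `ℤ[q,t]`. -/
def tZ : Zqt := X 1

lemma mem_dgF_iff {n : ℕ} {ν : Fin n → ℕ} {p : Fin n × ℕ} :
    p ∈ dgF n ν ↔ 1 ≤ p.2 ∧ p.2 ≤ ν p.1 := by
  obtain ⟨x, y⟩ := p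
  simp [dgF]

lemma armF_eq_sum {n : ℕ} (ν : Fin n → ℕ) (p : Fin n × ℕ) :
    armF n ν p = ∑ r : Fin n,
      ((if r < p.1 ∧ p.2 ≤ ν r ∧ ν r ≤ ν p.1 then 1 else 0) +
       (if p.1 < r ∧ p.2 - 1 ≤ ν r ∧ ν r < ν p.1 then 1 else 0)) := by
  rw [armF, Finset.sum_add_distrib, Finset.card_filter, Finset.card_filter]

lemma arm_swap {n : ℕ} {ν : Fin n → ℕ} {a b : Fin n} (hab : (a : ℕ) + 1 = (b : ℕ))
    (hlt : ν a < ν b) (p : Fin n × ℕ) :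
    armF n (ν ∘ Equiv.swap a b) (Equiv.swap a b p.1, p.2) =
      armF n ν p + (if p.1 = b ∧ p.2 = ν a + 1 then 1 else 0) := by
  obtain ⟨p1, j⟩ := p
  have hne : a ≠ b := by
    intro h; rw [h] at hab; omega
  have hne2 : b ≠ a := hne.symm
  set σ := Equiv.swap a b with hσ
  have hσσ : ∀ x, σ (σ x) = x := fun x => Equiv.swap_apply_self a b x
  rw [armF_eq_sum, armF_eq_sum]
  rw [← Equiv.sum_comp σ (fun r => ((if r < σ (p1, j).1 ∧ (p1, j).2 ≤ (ν ∘ σ) r ∧ (ν ∘ σ) r ≤ (ν ∘ σ) (σ (p1, j).1) then 1 else 0) +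
       (if σ (p1, j).1 < r ∧ (p1, j).2 - 1 ≤ (ν ∘ σ) r ∧ (ν ∘ σ) r < (ν ∘ σ) (σ (p1, j).1) then 1 else 0)))]
  have key : ∀ s : Fin n,
      ((if σ s < σ p1 ∧ j ≤ (ν ∘ σ) (σ s) ∧ (ν ∘ σ) (σ s) ≤ (ν ∘ σ) (σ p1) then (1:ℕ) else 0) +
       (if σ p1 < σ s ∧ j - 1 ≤ (ν ∘ σ) (σ s) ∧ (ν ∘ σ) (σ s) < (ν ∘ σ) (σ p1) then 1 else 0)) =
      ((if s < p1 ∧ j ≤ ν s ∧ ν s ≤ ν p1 then 1 else 0) +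
       (if p1 < s ∧ j - 1 ≤ ν s ∧ ν s < ν p1 then 1 else 0)) +
      (if s = a then (if p1 = b ∧ j = ν a + 1 then 1 else 0) else 0) := by
    intro s
    simp only [Function.comp_apply, hσσ]
    by_cases h3 : s = a
    · rw [h3]
      by_cases h1 : p1 = a
      · rw [h1]
        simp only [hσ, Equiv.swap_apply_left, Fin.lt_def, hne, false_and, if_false,
          lt_self_iff_false, and_true, if_pos rfl]
        first | done | (split_ifs <;> omega)
      · by_cases h2 : p1 = b
        · rw [h2]
          simp only [hσ, Equiv.swap_apply_left, Equiv.swap_apply_right, Fin.lt_def,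
            if_pos rfl, true_and]
          first | done | (split_ifs <;> omega)
        · have h1' : (p1 : ℕ) ≠ (a : ℕ) := Fin.val_ne_iff.2 h1
          have h2' : (p1 : ℕ) ≠ (b : ℕ) := Fin.val_ne_iff.2 h2
          simp only [hσ, Equiv.swap_apply_left, Equiv.swap_apply_of_ne_of_ne h1 h2,
            Fin.lt_def, if_pos rfl, h2, false_and, if_false, add_zero]
          first | done | (split_ifs <;> omega)
    · have h3' : (s : ℕ) ≠ (a : ℕ) := Fin.val_ne_iff.2 h3
      simp only [h3, if_false, add_zero]
      by_cases h4 : s = b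
      · rw [h4]
        by_cases h1 : p1 = a
        · rw [h1]
          simp only [hσ, Equiv.swap_apply_left, Equiv.swap_apply_right, Fin.lt_def]
          first | done | (split_ifs <;> omega)
        · by_cases h2 : p1 = b
          · rw [h2]
            simp only [hσ, Equiv.swap_apply_right, Fin.lt_def]
            first | done | (split_ifs <;> omega)
          · have h1' : (p1 : ℕ) ≠ (a : ℕ) := Fin.val_ne_iff.2 h1
            have h2' : (p1 : ℕ) ≠ (b : ℕ) := Fin.val_ne_iff.2 h2
            simp only [hσ, Equiv.swap_apply_right, Equiv.swap_apply_of_ne_of_ne h1 h2,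
              Fin.lt_def]
            first | done | (split_ifs <;> omega)
      · have h4' : (s : ℕ) ≠ (b : ℕ) := Fin.val_ne_iff.2 h4
        by_cases h1 : p1 = a
        · rw [h1]
          simp only [hσ, Equiv.swap_apply_left, Equiv.swap_apply_of_ne_of_ne h3 h4,
            Fin.lt_def]
          first | done | (split_ifs <;> omega)
        · by_cases h2 : p1 = b
          · rw [h2]
            simp only [hσ, Equiv.swap_apply_right, Equiv.swap_apply_of_ne_of_ne h3 h4,
              Fin.lt_def]
            first | done | (split_ifs <;> omega)
          · have h1' : (p1 : ℕ) ≠ (a : ℕ) := Fin.val_ne_iff.2 h1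
            have h2' : (p1 : ℕ) ≠ (b : ℕ) := Fin.val_ne_iff.2 h2
            simp only [hσ, Equiv.swap_apply_of_ne_of_ne h3 h4,
              Equiv.swap_apply_of_ne_of_ne h1 h2, Fin.lt_def]
            first | done | (split_ifs <;> omega)
  calc (∑ s : Fin n, ((if σ s < σ (p1, j).1 ∧ (p1, j).2 ≤ (ν ∘ σ) (σ s) ∧ (ν ∘ σ) (σ s) ≤ (ν ∘ σ) (σ (p1, j).1) then (1:ℕ) else 0) +
       (if σ (p1, j).1 < σ s ∧ (p1, j).2 - 1 ≤ (ν ∘ σ) (σ s) ∧ (ν ∘ σ) (σ s) < (ν ∘ σ) (σ (p1, j).1) then 1 else 0)))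
      = ∑ s : Fin n,
      (((if s < p1 ∧ j ≤ ν s ∧ ν s ≤ ν p1 then (1:ℕ) else 0) +
       (if p1 < s ∧ j - 1 ≤ ν s ∧ ν s < ν p1 then 1 else 0)) +
      (if s = a then (if p1 = b ∧ j = ν a + 1 then 1 else 0) else 0)) :=
      Finset.sum_congr rfl (fun s _ => key s)
    _ = _ := by
      rw [Finset.sum_add_distrib, Finset.sum_ite_eq' Finset.univ a]
      simp

/-- For `ν_i < ν_{i+1}` (1-indexed), with `u = (i, ν_i+1) ∈ dg(s_i ν)` and
`u' = (i+1, ν_i+1) ∈ dg(ν)`: (a) `ℓ_{s_iν}(u) = ℓ_ν(u')` and `a_{s_iν}(u) = a_ν(u') + 1`;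
(b) the product identity in `ℤ[q,t]`. -/
theorem arm_leg_swap_and_product (n : ℕ) (ν : Fin n → ℕ) (i : ℕ)
    (h1 : 1 ≤ i) (h2 : i < n)
    (hlt : ν ⟨i - 1, by omega⟩ < ν ⟨i, h2⟩) :
    let a : Fin n := ⟨i - 1, by omega⟩
    let b : Fin n := ⟨i, h2⟩
    let sν : Fin n → ℕ := ν ∘ Equiv.swap a b
    let u : Fin n × ℕ := (a, ν a + 1)
    let u' : Fin n × ℕ := (b, ν a + 1)
    (u ∈ dgF n sν ∧ u' ∈ dgF n ν) ∧
    (legF n sν u = legF n ν u' ∧ armF n sν u = armF n ν u' + 1) ∧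
    (∏ p ∈ dgF n ν, (1 - qZ ^ (legF n ν p + 1) * tZ ^ armF n ν p)) *
        (1 - qZ ^ (legF n sν u + 1) * tZ ^ armF n sν u) =
      (∏ p ∈ dgF n sν, (1 - qZ ^ (legF n sν p + 1) * tZ ^ armF n sν p)) *
        (1 - qZ ^ (legF n sν u + 1) * tZ ^ (armF n sν u - 1)) := by
  intro a b sν u u'
  have ha : (a : ℕ) = i - 1 := rfl
  have hb : (b : ℕ) = i := rfl
  have hab : (a : ℕ) + 1 = (b : ℕ) := by omega
  have hne : a ≠ b := by
    intro h; rw [h] at hab; omega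
  have hlt' : ν a < ν b := hlt
  have hswap := fun p => arm_swap (ν := ν) hab hlt' p
  have hsa : sν a = ν b := by
    simp only [sν, Function.comp_apply, Equiv.swap_apply_left]
  have hsb : sν b = ν a := by
    simp only [sν, Function.comp_apply, Equiv.swap_apply_right]
  have hmem_u' : u' ∈ dgF n ν := mem_dgF_iff.2 ⟨by show 1 ≤ ν a + 1; omega, by show ν a + 1 ≤ ν b; exact hlt'⟩
  have hmem_u : u ∈ dgF n sν := mem_dgF_iff.2 ⟨by show 1 ≤ ν a + 1; omega, by show ν a + 1 ≤ sν a; rw [hsa]; exact hlt'⟩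
  have hleg : legF n sν u = legF n ν u' := by
    show sν a - (ν a + 1) = ν b - (ν a + 1)
    rw [hsa]
  have harm : armF n sν u = armF n ν u' + 1 := by
    have h := hswap u'
    rw [if_pos ⟨rfl, rfl⟩] at h
    have hub : ((Equiv.swap a b u'.1, u'.2) : Fin n × ℕ) = u := by
      show ((Equiv.swap a b b, ν a + 1) : Fin n × ℕ) = (a, ν a + 1)
      rw [Equiv.swap_apply_right]
    rw [hub] at h
    exact h
  refine ⟨⟨hmem_u, hmem_u'⟩, ⟨hleg, harm⟩, ?_⟩
  have hreidx : ∀ f : Fin n × ℕ → Zqt,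
      ∏ p ∈ dgF n sν, f p = ∏ p ∈ dgF n ν, f (Equiv.swap a b p.1, p.2) := by
    intro f
    refine Finset.prod_nbij' (fun p => ((Equiv.swap a b p.1, p.2) : Fin n × ℕ))
      (fun p => ((Equiv.swap a b p.1, p.2) : Fin n × ℕ)) ?_ ?_ ?_ ?_ ?_
    · intro p hp
      rw [mem_dgF_iff] at hp ⊢
      have hq : ν (Equiv.swap a b p.1) = sν p.1 := rfl
      exact ⟨hp.1, by rw [hq]; exact hp.2⟩
    · intro p hp
      rw [mem_dgF_iff] at hp ⊢
      have hq : sν (Equiv.swap a b p.1) = ν p.1 := by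
        simp [sν, Equiv.swap_apply_self]
      exact ⟨hp.1, by rw [hq]; exact hp.2⟩
    · intro p _; simp [Equiv.swap_apply_self]
    · intro p _; simp [Equiv.swap_apply_self]
    · intro p _; simp [Equiv.swap_apply_self]
  rw [hreidx]
  have hlegr : ∀ p : Fin n × ℕ, legF n sν (Equiv.swap a b p.1, p.2) = legF n ν p := by
    intro p
    show sν (Equiv.swap a b p.1) - p.2 = ν p.1 - p.2
    have hq : sν (Equiv.swap a b p.1) = ν p.1 := by simp [sν, Equiv.swap_apply_self]
    rw [hq]
  have harmr : ∀ p : Fin n × ℕ,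
      armF n sν (Equiv.swap a b p.1, p.2) =
        armF n ν p + (if p.1 = b ∧ p.2 = ν a + 1 then 1 else 0) := hswap
  have hprodeq : ∏ p ∈ dgF n ν,
      (1 - qZ ^ (legF n sν (Equiv.swap a b p.1, p.2) + 1) *
        tZ ^ armF n sν (Equiv.swap a b p.1, p.2)) =
      ∏ p ∈ dgF n ν,
      (1 - qZ ^ (legF n ν p + 1) *
        tZ ^ (armF n ν p + (if p.1 = b ∧ p.2 = ν a + 1 then 1 else 0))) :=
    Finset.prod_congr rfl fun p _ => by rw [hlegr p, harmr p]
  rw [hprodeq]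
  rw [← Finset.mul_prod_erase _ _ hmem_u', ← Finset.mul_prod_erase _
    (fun p => (1 - qZ ^ (legF n ν p + 1) *
        tZ ^ (armF n ν p + (if p.1 = b ∧ p.2 = ν a + 1 then 1 else 0)))) hmem_u']
  have herase : ∏ p ∈ (dgF n ν).erase u',
      (1 - qZ ^ (legF n ν p + 1) *
        tZ ^ (armF n ν p + (if p.1 = b ∧ p.2 = ν a + 1 then 1 else 0))) =
      ∏ p ∈ (dgF n ν).erase u',
      (1 - qZ ^ (legF n ν p + 1) * tZ ^ armF n ν p) := by
    refine Finset.prod_congr rfl fun p hp => ?_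
    have hpne : p ≠ u' := Finset.ne_of_mem_erase hp
    have hnc : ¬(p.1 = b ∧ p.2 = ν a + 1) := by
      intro hc
      exact hpne (Prod.ext hc.1 hc.2)
    rw [if_neg hnc, add_zero]
  rw [herase]
  have hcond : u'.1 = b ∧ u'.2 = ν a + 1 := ⟨rfl, rfl⟩
  rw [if_pos hcond]
  rw [hleg, harm]
  have hA1 : armF n ν u' + 1 - 1 = armF n ν u' := by omega
  rw [hA1]
  ring
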